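/- arXiv:2605.19696 — 6 statements merged into one kernel-verified Lean document; each statement's English description precedes it below -/
import Mathlib

section
/- Let R be a commutative ring, let s be a finite nonempty set, and let G assign to every nonempty finite subset of s an element of R. For every nonempty subset A of s define the cumulant g(A) := Σ_{σ ∈ P(A)} (−1)^{|σ|−1} (|σ|−1)! ∏_{B ∈ σ} G(B), where P(A) denotes the set of partitions of A into nonempty blocks and |σ| the number of blocks of σ. Then the inversion formula holds: G(s) = Σ_{σ ∈ P(s)} ∏_{B ∈ σ} g(B). -/
/-!
Normalise `G ∅ = 1` and write `κ` for the cumulant of `G`; we show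
`∑_{σ ∈ P(s)} ∏_{B ∈ σ} κ B = G s` for every finite `s` by strong induction. Grouping the
partitions of `s` by the block `D` of a fixed point `a`, the induction hypothesis turns the left
side into `∑_{a ∈ D ⊆ s} κ D * G (s \ D)`, so it remains to prove this moment–cumulant recursion
for `G`. Expanding `κ D` and adjoining `s \ D` as a block, a partition `ρ` of `s` is obtained once
with coefficient `c |ρ|` (from `D = s`) and `|ρ| - 1` times with coefficient `c (|ρ| - 1)` (once
for each block missing `a`), where `c k = (-1)^(k-1) (k-1)!`. Since
`c k + (k - 1) c (k - 1) = 0` for `k ≥ 2`, only the one-block partition survives. Both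
regroupings are instances of the bijection between partitions of `s` with a marked block `D` and
pairs of a nonempty `D ⊆ s` and a partition of `s \ D`.
-/

open Finset

namespace Finpartition

section GeneralizedBooleanAlgebra

variable {α : Type*} [GeneralizedBooleanAlgebra α] [DecidableEq α] {a b : α}

theorem parts_avoid_of_mem (P : Finpartition a) (hb : b ∈ P.parts) :
    (P.avoid b).parts = P.parts.erase b := by
  ext c
  rw [mem_avoid, mem_erase]
  constructor
  · rintro ⟨d, hd, hdb, rfl⟩
    have hne : d ≠ b := by rintro rfl; exact hdb le_rfl
    rw [(show Disjoint d b from P.disjoint hd hb hne).sdiff_eq_left]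
    exact ⟨hne, hd⟩
  · rintro ⟨hne, hc⟩
    have hdisj : Disjoint c b := P.disjoint hc hb hne
    exact ⟨c, hc, fun hle => P.ne_bot hc (hdisj.eq_bot_of_le hle), hdisj.sdiff_eq_left⟩

theorem parts_avoid_extend {c : α} (P : Finpartition a) (hb : b ≠ ⊥) (hab : Disjoint a b)
    (hc : a ⊔ b = c) : ((P.extend hb hab hc).avoid b).parts = P.parts := by
  rw [parts_avoid_of_mem _ (by simp), extend_parts,
    erase_insert fun h => hb (hab.symm.eq_bot_of_le (P.le h))]

end GeneralizedBooleanAlgebra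

variable {α : Type*} [DecidableEq α]

theorem sum_sum_parts_erase {M : Type*} [AddCommMonoid M] (s : Finset α)
    (f : Finset α → Finset (Finset α) → M) :
    ∑ ρ : Finpartition s, ∑ D ∈ ρ.parts, f D (ρ.parts.erase D) =
      ∑ D ∈ s.powerset.erase ∅, ∑ π : Finpartition (s \ D), f D π.parts := by
  rw [sum_sigma', sum_sigma']
  have hmem : ∀ {D : Finset α}, D ∈ s.powerset.erase ∅ ↔ D ≠ ⊥ ∧ D ⊆ s := by simp
  refine sum_bij' (fun x _ => ⟨x.2, x.1.avoid x.2⟩)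
    (fun y hy => ⟨y.2.extend (hmem.1 (mem_sigma.1 hy).1).1 disjoint_sdiff_self_left
      (sdiff_sup_cancel (hmem.1 (mem_sigma.1 hy).1).2), y.1⟩) ?_ ?_ ?_ ?_ ?_
  · rintro ⟨ρ, D⟩ h
    rw [mem_sigma] at h ⊢
    exact ⟨hmem.2 ⟨ρ.ne_bot h.2, ρ.le h.2⟩, mem_univ _⟩
  · rintro ⟨D, π⟩ -
    simp
  · rintro ⟨ρ, D⟩ h
    exact Sigma.ext (Finpartition.ext (by
      simp [parts_avoid_of_mem ρ (mem_sigma.1 h).2, insert_erase (mem_sigma.1 h).2])) HEq.rfl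
  · rintro ⟨D, π⟩ h
    refine Sigma.ext rfl (heq_of_eq (Finpartition.ext ?_))
    exact parts_avoid_extend π (hmem.1 (mem_sigma.1 h).1).1 disjoint_sdiff_self_left
      (sdiff_sup_cancel (hmem.1 (mem_sigma.1 h).1).2)
  · rintro ⟨ρ, D⟩ h
    rw [parts_avoid_of_mem ρ (mem_sigma.1 h).2]

theorem sum_prod_parts_eq_sum_part_mem {M : Type*} [CommSemiring M] (h : Finset α → M)
    {s : Finset α} {a : α} (ha : a ∈ s) :
    ∑ σ : Finpartition s, ∏ B ∈ σ.parts, h B =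
      ∑ D ∈ s.powerset with a ∈ D, h D * ∑ π : Finpartition (s \ D), ∏ B ∈ π.parts, h B := by
  have hblock (σ : Finpartition s) :
      ∏ B ∈ σ.parts, h B =
        ∑ D ∈ σ.parts, if a ∈ D then h D * ∏ B ∈ σ.parts.erase D, h B else 0 := by
    rw [sum_eq_single_of_mem (σ.part a) (σ.part_mem.2 ha), if_pos (σ.mem_part ha),
      mul_prod_erase _ _ (σ.part_mem.2 ha)]
    intro D hD hne
    exact if_neg fun haD => hne (σ.part_eq_of_mem hD haD).symm
  calc ∑ σ : Finpartition s, ∏ B ∈ σ.parts, h B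
      = ∑ σ : Finpartition s, ∑ D ∈ σ.parts,
          if a ∈ D then h D * ∏ B ∈ σ.parts.erase D, h B else 0 := sum_congr rfl fun σ _ => hblock σ
    _ = ∑ D ∈ s.powerset.erase ∅, ∑ π : Finpartition (s \ D),
          if a ∈ D then h D * ∏ B ∈ π.parts, h B else 0 :=
      sum_sum_parts_erase s fun D Q => if a ∈ D then h D * ∏ B ∈ Q, h B else 0
    _ = _ := by
      simp_rw [sum_ite_irrel, sum_const_zero, ← sum_filter, filter_erase, ← mul_sum]
      rw [erase_eq_of_notMem (by simp)]

theorem card_parts_eq_one_iff {s : Finset α} (hs : s.Nonempty) (ρ : Finpartition s) :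
    #ρ.parts = 1 ↔ ρ = indiscrete hs.ne_empty := by
  refine ⟨fun h => ?_, fun h => by simp [h]⟩
  obtain ⟨B, hB⟩ := card_eq_one.1 h
  have : B = s := by simpa [hB] using ρ.sup_parts
  ext1
  simp [hB, this]

theorem card_filter_notMem_parts {s : Finset α} (ρ : Finpartition s) {a : α}
    (ha : a ∈ s) : #{E ∈ ρ.parts | a ∉ E} = #ρ.parts - 1 := by
  have : {E ∈ ρ.parts | a ∈ E} = {ρ.part a} := by
    ext E
    simp only [mem_filter, mem_singleton]
    exact ⟨fun h => (ρ.part_eq_of_mem h.1 h.2).symm,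
      by rintro rfl; exact ⟨ρ.part_mem.2 ha, ρ.mem_part ha⟩⟩
  rw [← card_filter_add_card_filter_not (s := ρ.parts) (a ∈ ·), this, card_singleton]
  omega

end Finpartition

section

variable {α R : Type*} [DecidableEq α] [CommRing R]

theorem Finset.sum_powerset_mem_eq_sum_powerset_notMem {M : Type*} [AddCommMonoid M]
    {s : Finset α} {a : α} (ha : a ∈ s) (f : Finset α → Finset α → M) :
    ∑ D ∈ s.powerset with a ∈ D, f D (s \ D) = ∑ E ∈ s.powerset with a ∉ E, f (s \ E) E := by
  have hinv {D : Finset α} (hD : D ∈ s.powerset) : s \ (s \ D) = D :=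
    Finset.sdiff_sdiff_eq_self (mem_powerset.1 hD)
  refine sum_nbij' (s \ ·) (s \ ·) ?_ ?_ (fun D hD => hinv (mem_filter.1 hD).1)
    (fun E hE => hinv (mem_filter.1 hE).1) (fun D hD => by rw [hinv (mem_filter.1 hD).1])
  · intro D hD
    rw [mem_filter, mem_powerset] at hD ⊢
    exact ⟨sdiff_subset, fun h => (mem_sdiff.1 h).2 hD.2⟩
  · intro E hE
    rw [mem_filter, mem_powerset] at hE ⊢
    exact ⟨sdiff_subset, mem_sdiff.2 ⟨ha, hE.2⟩⟩

def cumulantCoeff (R : Type*) [CommRing R] (k : ℕ) : R :=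
  (-1) ^ (k - 1) * ((k - 1).factorial : R)

theorem cumulantCoeff_add_pred_mul {k : ℕ} (hk : k ≠ 0) :
    cumulantCoeff R k + ((k - 1 : ℕ) : R) * cumulantCoeff R (k - 1) = if k = 1 then 1 else 0 := by
  obtain ⟨_ | j, rfl⟩ := Nat.exists_eq_succ_of_ne_zero hk
  · simp [cumulantCoeff]
  · rw [if_neg (by omega)]
    change (-1 : R) ^ (j + 1) * ((j + 1).factorial : R) +
      ((j + 1 : ℕ) : R) * ((-1) ^ j * (j.factorial : R)) = 0
    rw [Nat.factorial_succ]
    push_cast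
    ring

def cumulant (G : Finset α → R) (A : Finset α) : R :=
  ∑ σ : Finpartition A, cumulantCoeff R #σ.parts * ∏ B ∈ σ.parts, G B

theorem moment_eq_sum_cumulant_mul {G : Finset α → R} (h0 : G ∅ = 1) {s : Finset α} {a : α}
    (ha : a ∈ s) : G s = ∑ D ∈ s.powerset with a ∈ D, cumulant G D * G (s \ D) := by
  have hs : s.Nonempty := ⟨a, ha⟩
  have hcard (ρ : Finpartition s) : #ρ.parts ≠ 0 :=
    (card_pos.2 (ρ.parts_nonempty hs.ne_empty)).ne'
  have hterm (ρ : Finpartition s) :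
      ∑ E ∈ ρ.parts, (if a ∉ E then G E * (cumulantCoeff R #(ρ.parts.erase E) *
        ∏ B ∈ ρ.parts.erase E, G B) else 0) =
      ((#ρ.parts - 1 : ℕ) : R) * cumulantCoeff R (#ρ.parts - 1) * ∏ B ∈ ρ.parts, G B := by
    calc _ = ∑ E ∈ ρ.parts,
          if a ∉ E then cumulantCoeff R (#ρ.parts - 1) * ∏ B ∈ ρ.parts, G B else 0 := by
          refine sum_congr rfl fun E hE => ?_
          rw [card_erase_of_mem hE, mul_left_comm, mul_prod_erase _ _ hE]
      _ = _ := by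
          rw [sum_ite, sum_const_zero, add_zero, sum_const, ρ.card_filter_notMem_parts ha,
            nsmul_eq_mul, mul_assoc]
  calc G s
      = ∑ ρ : Finpartition s, (cumulantCoeff R #ρ.parts + ((#ρ.parts - 1 : ℕ) : R) *
          cumulantCoeff R (#ρ.parts - 1)) * ∏ B ∈ ρ.parts, G B := by
        simp_rw [cumulantCoeff_add_pred_mul (hcard _),
          Finpartition.card_parts_eq_one_iff hs, ite_mul, one_mul, zero_mul, sum_ite_eq',
          if_pos (mem_univ _), Finpartition.indiscrete_parts, prod_singleton]
    _ = cumulant G s + ∑ ρ : Finpartition s, ∑ E ∈ ρ.parts, (if a ∉ E then G E *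
          (cumulantCoeff R #(ρ.parts.erase E) * ∏ B ∈ ρ.parts.erase E, G B) else 0) := by
        simp_rw [hterm, cumulant, ← sum_add_distrib, add_mul]
    _ = cumulant G s + ∑ E ∈ s.powerset.erase ∅, ∑ π : Finpartition (s \ E),
          (if a ∉ E then G E * (cumulantCoeff R #π.parts * ∏ B ∈ π.parts, G B) else 0) := by
        rw [Finpartition.sum_sum_parts_erase s fun E Q =>
          if a ∉ E then G E * (cumulantCoeff R #Q * ∏ B ∈ Q, G B) else 0]
    _ = ∑ E ∈ s.powerset with a ∉ E, cumulant G (s \ E) * G E := by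
        simp_rw [sum_ite_irrel, sum_const_zero, ← sum_filter, filter_erase, ← mul_sum]
        rw [← add_sum_erase _ _ (show ∅ ∈ {E ∈ s.powerset | a ∉ E} by simp), sdiff_empty, h0,
          mul_one]
        exact congrArg _ (sum_congr rfl fun E _ => by rw [mul_comm, cumulant])
    _ = ∑ D ∈ s.powerset with a ∈ D, cumulant G D * G (s \ D) :=
        (sum_powerset_mem_eq_sum_powerset_notMem ha fun D E => cumulant G D * G E).symm

theorem sum_prod_cumulant {G : Finset α → R} (h0 : G ∅ = 1) (s : Finset α) :
    ∑ σ : Finpartition s, ∏ B ∈ σ.parts, cumulant G B = G s := by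
  induction s using Finset.strongInduction with | H s ih =>
  rcases s.eq_empty_or_nonempty with rfl | ⟨a, ha⟩
  · have : Unique (Finpartition (∅ : Finset α)) :=
      inferInstanceAs (Unique (Finpartition (⊥ : Finset α)))
    rw [Fintype.sum_unique, Finpartition.parts_eq_empty_iff.2 rfl, prod_empty, h0]
  rw [Finpartition.sum_prod_parts_eq_sum_part_mem _ ha, moment_eq_sum_cumulant_mul h0 ha]
  refine sum_congr rfl fun D hD => ?_
  rw [ih _ (sdiff_ssubset (mem_powerset.1 (mem_filter.1 hD).1) ⟨a, (mem_filter.1 hD).2⟩)]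

end

/-- **Inversion formula for cumulants** (Proposition 2.1).
If for every nonempty subset `A` of `s` the cumulant `g A` is defined from the
correlation functions `G` by
`g A = ∑_{σ ∈ P(A)} (−1)^{|σ|−1} (|σ|−1)! ∏_{B ∈ σ} G B`,
then `G s = ∑_{σ ∈ P(s)} ∏_{B ∈ σ} g B`. -/
theorem cumulant_inversion_formula {α : Type*} [DecidableEq α] {R : Type*} [CommRing R]
    (s : Finset α) (hs : s.Nonempty) (G : Finset α → R) (g : Finset α → R)
    (hg : ∀ A : Finset α, A ⊆ s → A.Nonempty →
      g A = ∑ σ : Finpartition A,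
        (-1 : R) ^ (σ.parts.card - 1) * ((Nat.factorial (σ.parts.card - 1) : ℕ) : R) * ∏ B ∈ σ.parts, G B) :
    G s = ∑ σ : Finpartition s, ∏ B ∈ σ.parts, g B := by
  -- `g` never sees `G ∅`, so we may normalise it to `1`.
  set G₁ := Function.update G ∅ 1
  have hg₁ : ∀ A ⊆ s, A.Nonempty → g A = cumulant G₁ A := by
    intro A hA hne
    rw [hg A hA hne, cumulant]
    refine sum_congr rfl fun σ _ => congrArg _ (prod_congr rfl fun B hB => ?_)
    exact (Function.update_of_ne (σ.ne_empty hB) _ _).symm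
  calc G s = G₁ s := (Function.update_of_ne hs.ne_empty _ _).symm
    _ = ∑ σ : Finpartition s, ∏ B ∈ σ.parts, cumulant G₁ B :=
      (sum_prod_cumulant (Function.update_self _ _ _) s).symm
    _ = ∑ σ : Finpartition s, ∏ B ∈ σ.parts, g B :=
      sum_congr rfl fun σ _ => prod_congr rfl fun B hB =>
        (hg₁ B (σ.le hB) (σ.nonempty_of_mem_parts hB)).symm
end

section
/- Let β > 0 and let R : ℝ³ → ℝ be bounded and measurable. For v ∈ ℝ³ define the gain operator K̂R(v) := ∫_{ℝ³} ∫_{𝕊²} ⟨v_c − v, ω⟩_+ M_β(v_c) M_β(v)^{1/2} M_β(v')^{−1/2} R(v') dω dv_c, where v' := v − ⟨v − v_c, ω⟩ω. Then K̂R admits the integral-kernel representation K̂R(v) = √(β/(2π)) ∫_{ℝ³} (R(η)/|η − v|) exp( −β [ |η − v|²/8 + (|η|² − |v|²)²/(8|η − v|²) ] ) dη for every v ∈ ℝ³ with v ≠ η on a null set (the formula holding for all v). -/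
open scoped RealInnerProductSpace
open MeasureTheory

/-- The Maxwellian equilibrium distribution `M_β` on `ℝ³`. -/
noncomputable def Maxwellian3 (β : ℝ) (v : EuclideanSpace ℝ (Fin 3)) : ℝ :=
  (β / (2 * Real.pi)) ^ ((3 : ℝ) / 2) * Real.exp (-(β / 2) * ‖v‖ ^ 2)

/-- The gain operator `K̂` of the linear Rayleigh–Boltzmann equation after the
symmetrizing change of unknown `R = M_β^{1/2} φ`:
`K̂R(v) = ∫∫ ⟨v_c − v, ω⟩₊ M_β(v_c) M_β(v)^{1/2} M_β(v')^{−1/2} R(v') dω dv_c`,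
where `v' = v − ⟨v − v_c, ω⟩ω`. -/
noncomputable def gainOp (β : ℝ) (R : EuclideanSpace ℝ (Fin 3) → ℝ)
    (v : EuclideanSpace ℝ (Fin 3)) : ℝ :=
  ∫ vc : EuclideanSpace ℝ (Fin 3),
    ∫ ω : Metric.sphere (0 : EuclideanSpace ℝ (Fin 3)) 1,
      max ⟪vc - v, (ω : EuclideanSpace ℝ (Fin 3))⟫ 0 * Maxwellian3 β vc
        * (Maxwellian3 β v) ^ ((1 : ℝ) / 2)
        * (Maxwellian3 β (v - ⟪v - vc, (ω : EuclideanSpace ℝ (Fin 3))⟫ •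
            (ω : EuclideanSpace ℝ (Fin 3)))) ^ (-((1 : ℝ) / 2))
        * R (v - ⟪v - vc, (ω : EuclideanSpace ℝ (Fin 3))⟫ •
            (ω : EuclideanSpace ℝ (Fin 3)))
      ∂((volume : Measure (EuclideanSpace ℝ (Fin 3))).toSphere)

/-! Put `v_c = v + w`. For fixed `ω` the integrand depends on `w` only through `t = ⟪w, ω⟫` and
the Gaussian factor `M_β(v + w)`, so integrating out the directions orthogonal to `ω` leaves a
one-dimensional integral over `t > 0`; completing the square in the exponent produces the
claimed kernel. Reading `η = v + t ω` as polar coordinates around `v`, the weight `t` coming from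
`⟨v_c − v, ω⟩₊` against the Jacobian `t²` leaves the factor `1 / |η − v|`. Both exchanges of
integrals are justified by the Gaussian decay of the integrands. -/

open Real Set Metric Module

section Gaussian

variable {V : Type*} [NormedAddCommGroup V] [InnerProductSpace ℝ V] [FiniteDimensional ℝ V]
  [MeasurableSpace V] [BorelSpace V] {n : ℕ} {ω : V}

theorem integral_comp_inner_mul_exp_neg_mul_sq_norm (hn : finrank ℝ V = n + 1) (hω : ‖ω‖ = 1)
    (b : ℝ) (f : ℝ → ℝ) :
    ∫ w : V, f ⟪w, ω⟫ * exp (-b * ‖w‖ ^ 2) = √(π / b) ^ n * ∫ t, f t * exp (-b * t ^ 2) := by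
  obtain ⟨e, he⟩ : ∃ e : OrthonormalBasis (Fin (n + 1)) ℝ V,
      ∀ i ∈ ({0} : Set (Fin (n + 1))), e i = ω := by
    refine Orthonormal.exists_orthonormalBasis_extension_of_card_eq (by simpa using hn) ?_
    simp [hω]
  let g : Fin (n + 1) → ℝ → ℝ :=
    Fin.cons (fun t => f t * exp (-b * t ^ 2)) fun _ t => exp (-b * t ^ 2)
  have hg (x : Fin (n + 1) → ℝ) :
      f ⟪e.repr.symm (WithLp.toLp 2 x), ω⟫ * exp (-b * ‖e.repr.symm (WithLp.toLp 2 x)‖ ^ 2)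
        = ∏ i, g i (x i) := by
    rw [← he 0 rfl, real_inner_comm, ← e.repr_apply_apply, LinearIsometryEquiv.apply_symm_apply,
      LinearIsometryEquiv.norm_map, EuclideanSpace.real_norm_sq_eq, Finset.mul_sum, exp_sum,
      Fin.prod_univ_succ, Fin.prod_univ_succ]
    simp only [g, Fin.cons_zero, Fin.cons_succ, neg_mul]
    ring
  rw [← e.measurePreserving_repr_symm.integral_comp e.repr.symm.toHomeomorph.measurableEmbedding,
    ← (PiLp.volume_preserving_toLp (Fin (n + 1))).integral_comp
      (MeasurableEquiv.toLp 2 _).measurableEmbedding]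
  simp only [hg]
  rw [integral_fin_nat_prod_volume_eq_prod, Fin.prod_univ_succ]
  simp only [g, Fin.cons_zero, Fin.cons_succ, integral_gaussian, Finset.prod_const,
    Finset.card_univ, Fintype.card_fin, mul_comm]

theorem integral_comp_inner_mul_exp_neg_mul_sq_norm_add (hn : finrank ℝ V = n + 1)
    (hω : ‖ω‖ = 1) (b : ℝ) (f : ℝ → ℝ) (v : V) :
    ∫ w : V, f ⟪w, ω⟫ * exp (-b * ‖v + w‖ ^ 2)
      = √(π / b) ^ n * ∫ t, f t * exp (-b * (⟪v, ω⟫ + t) ^ 2) :=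
  calc ∫ w : V, f ⟪w, ω⟫ * exp (-b * ‖v + w‖ ^ 2)
      = ∫ w : V, f (⟪w, ω⟫ - ⟪v, ω⟫) * exp (-b * ‖w‖ ^ 2) := by
        rw [← integral_sub_right_eq_self _ v]
        simp only [inner_sub_left, add_sub_cancel]
    _ = √(π / b) ^ n * ∫ t, f (t - ⟪v, ω⟫) * exp (-b * t ^ 2) :=
        integral_comp_inner_mul_exp_neg_mul_sq_norm hn hω b (fun t => f (t - ⟪v, ω⟫))
    _ = √(π / b) ^ n * ∫ t, f t * exp (-b * (⟪v, ω⟫ + t) ^ 2) := by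
        rw [← integral_add_right_eq_self _ ⟪v, ω⟫]
        simp only [add_sub_cancel_right, add_comm]

end Gaussian

section Polar

variable {E F : Type*} [NormedAddCommGroup E] [NormedSpace ℝ E] [FiniteDimensional ℝ E]
  [Nontrivial E] [MeasurableSpace E] [BorelSpace E] (μ : Measure E) [μ.IsAddHaarMeasure]
  [NormedAddCommGroup F] [NormedSpace ℝ F]

theorem integrable_norm_rpow_mul_exp_neg_mul_sq_norm {b : ℝ} (hb : 0 < b) {s : ℝ}
    (hs : -(finrank ℝ E : ℝ) < s) :
    Integrable (fun x : E => ‖x‖ ^ s * exp (-b * ‖x‖ ^ 2)) μ := by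
  rw [integrable_fun_norm_addHaar μ (f := fun y => y ^ s * exp (-b * y ^ 2))]
  have hd : 0 < finrank ℝ E := finrank_pos
  refine (integrableOn_rpow_mul_exp_neg_mul_sq hb (s := (finrank ℝ E - 1 : ℕ) + s)
    (by push_cast [Nat.cast_pred hd]; linarith)).congr_fun (fun y (hy : 0 < y) => ?_)
    measurableSet_Ioi
  dsimp only
  rw [rpow_add hy, rpow_natCast, smul_eq_mul, mul_assoc]

theorem integral_eq_integral_sphere_integral_Ioi {f : E → F} (hf : Integrable f μ) :
    ∫ x, f x ∂μ = ∫ ω : sphere (0 : E) 1,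
      (∫ r in Ioi (0 : ℝ), r ^ (finrank ℝ E - 1) • f (r • (ω : E))) ∂μ.toSphere := by
  have hmp := μ.measurePreserving_homeomorphUnitSphereProd
  have hemb := (homeomorphUnitSphereProd E).measurableEmbedding
  have hcomp : (fun p : sphere (0 : E) 1 × Ioi (0 : ℝ) => f ((p.2 : ℝ) • (p.1 : E)))
      ∘ homeomorphUnitSphereProd E = f ∘ Subtype.val := by
    ext x
    simp [smul_inv_smul₀ (norm_ne_zero_iff.mpr x.2)]
  have hf' : Integrable (fun p : sphere (0 : E) 1 × Ioi (0 : ℝ) => f ((p.2 : ℝ) • (p.1 : E)))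
      (μ.toSphere.prod (.volumeIoiPow (finrank ℝ E - 1))) := by
    rw [← hmp.integrable_comp_emb hemb, hcomp, ← integrableOn_iff_comap_subtypeVal
      (measurableSet_singleton 0).compl, IntegrableOn, restrict_compl_singleton]
    exact hf
  calc ∫ x, f x ∂μ = ∫ x : ({0}ᶜ : Set E), f x ∂μ.comap (↑) := by
        rw [integral_subtype_comap (measurableSet_singleton _).compl, restrict_compl_singleton]
    _ = ∫ p, f ((p.2 : ℝ) • (p.1 : E)) ∂μ.toSphere.prod (.volumeIoiPow (finrank ℝ E - 1)) := by
        rw [← hmp.integral_comp hemb]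
        exact integral_congr_ae (.of_forall (congrFun hcomp.symm))
    _ = _ := by
        rw [integral_prod _ hf']
        refine integral_congr_ae (.of_forall fun ω => ?_)
        simp only [Measure.volumeIoiPow, ENNReal.ofReal]
        rw [integral_withDensity_eq_integral_smul (by fun_prop), ← integral_subtype_comap
          measurableSet_Ioi fun r : ℝ => r ^ (finrank ℝ E - 1) • f (r • (ω : E))]
        refine integral_congr_ae (.of_forall fun r => ?_)
        simp [NNReal.smul_def, Real.coe_toNNReal _ (pow_nonneg r.2.out.le _)]

end Polar

local notation "ℝ³" => EuclideanSpace ℝ (Fin 3)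

theorem continuous_maxwellian3 (β : ℝ) : Continuous (Maxwellian3 β) := by
  unfold Maxwellian3
  fun_prop

theorem maxwellian3_rpow_half_mul_rpow_neg_half {β : ℝ} (hβ : 0 < β) (x y : ℝ³) :
    Maxwellian3 β x ^ ((1 : ℝ) / 2) * Maxwellian3 β y ^ (-((1 : ℝ) / 2))
      = exp (β / 4 * (‖y‖ ^ 2 - ‖x‖ ^ 2)) := by
  have h : 0 < β / (2 * π) := by positivity
  simp only [Maxwellian3]
  rw [mul_rpow (by positivity) (by positivity), mul_rpow (by positivity) (by positivity),
    ← rpow_mul h.le, ← rpow_mul h.le, ← exp_mul, ← exp_mul, mul_mul_mul_comm, ← rpow_add h,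
    ← exp_add, show (3 : ℝ) / 2 * (1 / 2) + 3 / 2 * -(1 / 2) = 0 by ring, rpow_zero, one_mul]
  ring_nf

section Gain

variable (β : ℝ) (R : ℝ³ → ℝ) (v : ℝ³)

noncomputable def gainIntegrand (w ω : ℝ³) : ℝ :=
  max ⟪w, ω⟫ 0 * Maxwellian3 β (v + w) * Maxwellian3 β v ^ ((1 : ℝ) / 2)
    * Maxwellian3 β (v + ⟪w, ω⟫ • ω) ^ (-((1 : ℝ) / 2)) * R (v + ⟪w, ω⟫ • ω)

noncomputable def gainKernelIntegrand (u : ℝ³) : ℝ :=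
  R (v + u) / ‖u‖ * exp (-β * (‖u‖ ^ 2 / 8 + (‖v + u‖ ^ 2 - ‖v‖ ^ 2) ^ 2 / (8 * ‖u‖ ^ 2)))

theorem gainOp_eq_integral_gainIntegrand :
    gainOp β R v = ∫ w, ∫ ω : sphere (0 : ℝ³) 1, gainIntegrand β R v w ω
      ∂(volume : Measure ℝ³).toSphere := by
  rw [gainOp, ← integral_add_left_eq_self _ v]
  simp only [gainIntegrand, add_sub_cancel_left, sub_add_cancel_left, inner_neg_left, neg_smul,
    sub_neg_eq_add]

variable {β R}

theorem gainIntegrand_eq (hβ : 0 < β) (w ω : ℝ³) :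
    gainIntegrand β R v w ω = (β / (2 * π)) ^ ((3 : ℝ) / 2) *
      (max ⟪w, ω⟫ 0 * exp (β / 4 * (‖v + ⟪w, ω⟫ • ω‖ ^ 2 - ‖v‖ ^ 2)) * R (v + ⟪w, ω⟫ • ω)
        * exp (-(β / 2) * ‖v + w‖ ^ 2)) := by
  rw [gainIntegrand, mul_assoc _ (Maxwellian3 β v ^ _),
    maxwellian3_rpow_half_mul_rpow_neg_half hβ, Maxwellian3]
  ring

theorem gainIntegrand_exponent_le (hβ : 0 ≤ β) (w : ℝ³) {ω : ℝ³} (hω : ‖ω‖ = 1) :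
    β / 4 * (‖v + ⟪w, ω⟫ • ω‖ ^ 2 - ‖v‖ ^ 2) + -(β / 2) * ‖v + w‖ ^ 2
      ≤ 4 * β * ‖v‖ ^ 2 + -(β / 8) * ‖w‖ ^ 2 := by
  have hfar : ‖v + ⟪w, ω⟫ • ω‖ ≤ ‖v‖ + ‖w‖ := by
    refine (norm_add_le _ _).trans ?_
    gcongr
    simpa [norm_smul, hω] using abs_real_inner_le_norm w ω
  have hnear : |‖w‖ - ‖v‖| ≤ ‖v + w‖ := by
    simpa [add_comm] using abs_norm_sub_norm_le w (-v)
  have h1 : ‖v + ⟪w, ω⟫ • ω‖ ^ 2 ≤ (‖v‖ + ‖w‖) ^ 2 := by gcongr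
  have h2 : (‖w‖ - ‖v‖) ^ 2 ≤ ‖v + w‖ ^ 2 := by
    rw [← sq_abs]
    gcongr
  -- `(‖w‖ - 6‖v‖)² ≥ 0` gives `(3/2)‖v‖‖w‖ ≤ ‖w‖²/8 + (9/2)‖v‖²`
  nlinarith [mul_nonneg hβ (sq_nonneg (‖w‖ - 6 * ‖v‖)), mul_nonneg hβ (sq_nonneg ‖v‖)]

theorem integral_gainIntegrand (hβ : 0 < β) {ω : ℝ³} (hω : ‖ω‖ = 1) :
    ∫ w, gainIntegrand β R v w ω
      = √(β / (2 * π)) * ∫ r in Ioi (0 : ℝ), r ^ 2 * gainKernelIntegrand β R v (r • ω) := by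
  set f : ℝ → ℝ := fun t => max t 0 * exp (β / 4 * (‖v + t • ω‖ ^ 2 - ‖v‖ ^ 2)) * R (v + t • ω)
  have hconst : (β / (2 * π)) ^ ((3 : ℝ) / 2) * √(π / (β / 2)) ^ 2 = √(β / (2 * π)) := by
    rw [sq_sqrt (by positivity), sqrt_eq_rpow, show (3 : ℝ) / 2 = 1 + 1 / 2 by norm_num,
      rpow_add (by positivity), rpow_one]
    field_simp
  have hpos (t : ℝ) (ht : 0 < t) :
      f t * exp (-(β / 2) * (⟪v, ω⟫ + t) ^ 2) = t ^ 2 * gainKernelIntegrand β R v (t • ω) := by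
    have hnorm : ‖t • ω‖ = t := by rw [norm_smul, hω, mul_one, norm_of_nonneg ht.le]
    have hsq : ‖v + t • ω‖ ^ 2 - ‖v‖ ^ 2 = 2 * t * ⟪v, ω⟫ + t ^ 2 := by
      rw [norm_add_sq_real, inner_smul_right, hnorm]
      ring
    have hexp : β / 4 * (2 * t * ⟪v, ω⟫ + t ^ 2) + -(β / 2) * (⟪v, ω⟫ + t) ^ 2
        = -β * (t ^ 2 / 8 + (2 * t * ⟪v, ω⟫ + t ^ 2) ^ 2 / (8 * t ^ 2)) := by
      field_simp
      ring
    simp only [f, gainKernelIntegrand, max_eq_left ht.le, hnorm, hsq, ← hexp, exp_add]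
    field_simp
  calc ∫ w, gainIntegrand β R v w ω
      = (β / (2 * π)) ^ ((3 : ℝ) / 2) * ∫ w, f ⟪w, ω⟫ * exp (-(β / 2) * ‖v + w‖ ^ 2) := by
        simp only [gainIntegrand_eq v hβ, f]
        exact integral_const_mul _ _
    _ = √(β / (2 * π)) * ∫ t, f t * exp (-(β / 2) * (⟪v, ω⟫ + t) ^ 2) := by
        rw [integral_comp_inner_mul_exp_neg_mul_sq_norm_add finrank_euclideanSpace_fin hω,
          ← hconst]
        ring
    _ = _ := by
        rw [← setIntegral_eq_integral_of_forall_compl_eq_zero fun t (ht : ¬ 0 < t) => ?_]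
        · exact congrArg _ (setIntegral_congr_fun measurableSet_Ioi hpos)
        · simp [f, max_eq_right (not_lt.mp ht)]

theorem integrable_gainIntegrand (hβ : 0 < β) (hR : Measurable R) {C : ℝ}
    (hC : ∀ x, |R x| ≤ C) :
    Integrable (Function.uncurry fun w (ω : sphere (0 : ℝ³) 1) => gainIntegrand β R v w ω)
      ((volume : Measure ℝ³).prod (volume : Measure ℝ³).toSphere) := by
  have hmeas : Measurable
      (Function.uncurry fun w (ω : sphere (0 : ℝ³) 1) => gainIntegrand β R v w ω) := by
    have := continuous_maxwellian3 β
    unfold gainIntegrand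
    fun_prop
  have hdom := ((integrable_norm_rpow_mul_exp_neg_mul_sq_norm (volume : Measure ℝ³)
    (by positivity : 0 < β / 8) (s := 1) (by norm_num)).const_mul
      ((β / (2 * π)) ^ ((3 : ℝ) / 2) * C * exp (4 * β * ‖v‖ ^ 2))).comp_fst
      (volume : Measure ℝ³).toSphere
  refine hdom.mono' hmeas.aestronglyMeasurable (.of_forall fun ⟨w, ω⟩ => ?_)
  have hω : ‖(ω : ℝ³)‖ = 1 := norm_eq_of_mem_sphere ω
  have hmax : max ⟪w, (ω : ℝ³)⟫ 0 ≤ ‖w‖ :=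
    max_le ((le_abs_self _).trans (by simpa [hω] using abs_real_inner_le_norm w ω))
      (norm_nonneg w)
  calc ‖gainIntegrand β R v w ω‖
      = (β / (2 * π)) ^ ((3 : ℝ) / 2) * (max ⟪w, (ω : ℝ³)⟫ 0
          * |R (v + ⟪w, (ω : ℝ³)⟫ • (ω : ℝ³))| * exp (β / 4 * (‖v + ⟪w, (ω : ℝ³)⟫ • (ω : ℝ³)‖ ^ 2
            - ‖v‖ ^ 2) + -(β / 2) * ‖v + w‖ ^ 2)) := by
        rw [gainIntegrand_eq v hβ, Real.norm_eq_abs, abs_mul, abs_of_pos (by positivity),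
          abs_mul, abs_mul, abs_mul, abs_of_nonneg (le_max_right _ _), abs_of_pos (exp_pos _),
          abs_of_pos (exp_pos _), exp_add]
        ring
    _ ≤ (β / (2 * π)) ^ ((3 : ℝ) / 2)
          * (‖w‖ * C * exp (4 * β * ‖v‖ ^ 2 + -(β / 8) * ‖w‖ ^ 2)) := by
        gcongr _ * (?_ * ?_ * exp ?_)
        · exact mul_nonneg (norm_nonneg w) ((abs_nonneg _).trans (hC 0))
        · exact hC _
        · exact gainIntegrand_exponent_le v hβ.le w hω
    _ = _ := by
        rw [rpow_one, exp_add]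
        ring

theorem integrable_gainKernelIntegrand (hβ : 0 < β) (hR : Measurable R) {C : ℝ}
    (hC : ∀ x, |R x| ≤ C) :
    Integrable (gainKernelIntegrand β R v) := by
  have hmeas : Measurable (gainKernelIntegrand β R v) := by
    unfold gainKernelIntegrand
    fun_prop
  have hdom := (integrable_norm_rpow_mul_exp_neg_mul_sq_norm (volume : Measure ℝ³)
    (by positivity : 0 < β / 8) (s := -1) (by norm_num)).const_mul C
  refine hdom.mono' hmeas.aestronglyMeasurable (.of_forall fun u => ?_)
  have hexp : -β * (‖u‖ ^ 2 / 8 + (‖v + u‖ ^ 2 - ‖v‖ ^ 2) ^ 2 / (8 * ‖u‖ ^ 2))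
      ≤ -(β / 8) * ‖u‖ ^ 2 := by
    have : 0 ≤ (‖v + u‖ ^ 2 - ‖v‖ ^ 2) ^ 2 / (8 * ‖u‖ ^ 2) := by positivity
    nlinarith
  rw [gainKernelIntegrand, Real.norm_eq_abs, abs_mul, abs_div, abs_norm, abs_of_pos (exp_pos _),
    rpow_neg_one, div_eq_mul_inv, mul_assoc]
  gcongr
  · exact (abs_nonneg _).trans (hC 0)
  · exact hC _

end Gain

/-- **Integral-kernel representation of the gain operator** (Lemma B.1, first part):
`K̂R(v) = √(β/2π) ∫ R(η)/|η−v| · exp(−β[|η−v|²/8 + (|η|²−|v|²)²/(8|η−v|²)]) dη`. -/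
theorem gainOp_kernel_representation (β : ℝ) (hβ : 0 < β)
    (R : EuclideanSpace ℝ (Fin 3) → ℝ) (hRmeas : Measurable R)
    (hRbdd : ∃ C : ℝ, ∀ v, |R v| ≤ C) (v : EuclideanSpace ℝ (Fin 3)) :
    gainOp β R v
      = Real.sqrt (β / (2 * Real.pi)) *
          ∫ η : EuclideanSpace ℝ (Fin 3),
            R η / ‖η - v‖ *
              Real.exp (-β * (‖η - v‖ ^ 2 / 8
                + (‖η‖ ^ 2 - ‖v‖ ^ 2) ^ 2 / (8 * ‖η - v‖ ^ 2))) := by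
  obtain ⟨C, hC⟩ := hRbdd
  have hpolar := integral_eq_integral_sphere_integral_Ioi volume
    (integrable_gainKernelIntegrand v hβ hRmeas hC)
  simp only [finrank_euclideanSpace_fin, smul_eq_mul] at hpolar
  rw [gainOp_eq_integral_gainIntegrand,
    integral_integral_swap (integrable_gainIntegrand v hβ hRmeas hC),
    integral_congr_ae (.of_forall fun ω => integral_gainIntegrand v hβ (norm_eq_of_mem_sphere ω)),
    integral_const_mul, ← hpolar]
  conv_rhs => rw [← integral_add_left_eq_self _ v]
  simp only [gainKernelIntegrand, add_sub_cancel_left]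
end

section
/- Let β > 0. There exists a constant C (depending only on β) such that for every bounded measurable R : ℝ³ → ℝ and every v ∈ ℝ³, |K̂R(v)| ≤ C · sup_{η ∈ ℝ³} |R(η)|, where K̂R(v) := ∫_{ℝ³} ∫_{𝕊²} ⟨v_c − v, ω⟩_+ M_β(v_c) M_β(v)^{1/2} M_β(v')^{−1/2} R(v') dω dv_c with v' := v − ⟨v − v_c, ω⟩ω. In other words, the gain operator K̂ is a bounded linear operator from L^∞(ℝ³) to itself. -/
/-!
Write `v' = v - ⟪v - v_c, ω⟫ ω` and `v_c' = v_c - ⟪v_c - v, ω⟫ ω`. Energy conservation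
`‖v'‖² + ‖v_c'‖² = ‖v‖² + ‖v_c‖²` turns the Maxwellian weights into
`M_β(v_c) M_β(v)^{1/2} M_β(v')^{-1/2} = (β/2π)^{3/2} exp(-β/4 (‖v_c‖² + ‖v_c'‖²))`,
and the relative speed `⟪v_c - v, ω⟫ = ‖v_c - v_c'‖ ≤ ‖v_c‖ + ‖v_c'‖` is absorbed by half of
that Gaussian. The integrand is thus bounded by `sup |R|` times a Gaussian in `v_c` alone,
uniformly in `v` and `ω`, so `|K̂R(v)| ≤ |𝕊²| · ∫ Gaussian · sup |R|`.
-/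

open scoped RealInnerProductSpace
open MeasureTheory

open Real

local notation "ℝ³" => EuclideanSpace ℝ (Fin 3)

section Collision

variable {E : Type*} [NormedAddCommGroup E] [InnerProductSpace ℝ E]

noncomputable def collisionVel (v vc ω : E) : E := v - ⟪v - vc, ω⟫ • ω

theorem norm_sq_collisionVel_add_norm_sq_collisionVel {ω : E} (hω : ‖ω‖ = 1) (v vc : E) :
    ‖collisionVel v vc ω‖ ^ 2 + ‖collisionVel vc v ω‖ ^ 2 = ‖v‖ ^ 2 + ‖vc‖ ^ 2 := by
  simp only [collisionVel, norm_sub_sq_real, real_inner_smul_right, norm_smul, inner_sub_left,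
    hω, Real.norm_eq_abs, mul_one, sq_abs]
  ring

theorem norm_sub_collisionVel {ω : E} (hω : ‖ω‖ = 1) (v vc : E) :
    ‖v - collisionVel v vc ω‖ = |⟪v - vc, ω⟫| := by
  simp [collisionVel, norm_smul, hω]

end Collision

theorem mul_exp_neg_mul_sq_le {c : ℝ} (hc : 0 < c) (t : ℝ) :
    t * exp (-(c * t ^ 2)) ≤ 1 / (2 * √c) := by
  have hsq : √c ^ 2 = c := sq_sqrt hc.le
  have key : 2 * √c * t ≤ exp (c * t ^ 2) := by
    nlinarith [add_one_le_exp (c * t ^ 2), sq_nonneg (√c * t - 1)]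
  rw [exp_neg, ← div_eq_mul_inv, div_le_div_iff₀ (exp_pos _) (by positivity)]
  linarith

theorem add_mul_exp_neg_sq_add_sq_le {b x y : ℝ} (hb : 0 < b) (hx : 0 ≤ x) (hy : 0 ≤ y) :
    (x + y) * exp (-(2 * b * (x ^ 2 + y ^ 2))) ≤ exp (-(b * x ^ 2)) / √b := by
  have hx' : x * exp (-(2 * b * (x ^ 2 + y ^ 2)))
      ≤ x * exp (-(b * x ^ 2)) * exp (-(b * x ^ 2)) := by
    rw [mul_assoc x, ← exp_add]
    gcongr
    nlinarith [sq_nonneg y]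
  have hy' : y * exp (-(2 * b * (x ^ 2 + y ^ 2)))
      ≤ y * exp (-(b * y ^ 2)) * exp (-(b * x ^ 2)) := by
    rw [mul_assoc y, ← exp_add]
    gcongr
    nlinarith [sq_nonneg x, sq_nonneg y]
  have hK := mul_le_mul_of_nonneg_right (mul_exp_neg_mul_sq_le hb x) (exp_pos (-(b * x ^ 2))).le
  have hK' := mul_le_mul_of_nonneg_right (mul_exp_neg_mul_sq_le hb y) (exp_pos (-(b * x ^ 2))).le
  have h2K : 2 * (1 / (2 * √b)) = 1 / √b := by field_simp
  calc (x + y) * exp (-(2 * b * (x ^ 2 + y ^ 2)))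
      ≤ 2 * (1 / (2 * √b)) * exp (-(b * x ^ 2)) := by linarith
    _ = exp (-(b * x ^ 2)) / √b := by rw [h2K, one_div_mul_eq_div]

theorem integrable_exp_neg_mul_sq_norm {V : Type*} [NormedAddCommGroup V] [InnerProductSpace ℝ V]
    [FiniteDimensional ℝ V] [MeasurableSpace V] [BorelSpace V] {b : ℝ} (hb : 0 < b) :
    Integrable (fun v : V => exp (-(b * ‖v‖ ^ 2))) := by
  refine (GaussianFourier.integrable_cexp_neg_mul_sq_norm_add (V := V) (b := b)
    (by simpa using hb) 0 0).norm.congr (.of_forall fun v => ?_)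
  simp [Complex.norm_exp, ← Complex.ofReal_pow, neg_mul]

theorem abs_integral_integral_le {α γ : Type*} [MeasurableSpace α] [MeasurableSpace γ]
    {μ : Measure α} {ν : Measure γ} [IsFiniteMeasure ν] {f : α → γ → ℝ} {g : α → ℝ}
    (hg : Integrable g μ) (hfg : ∀ x y, |f x y| ≤ g x) :
    |∫ x, ∫ y, f x y ∂ν ∂μ| ≤ ν.real Set.univ * ∫ x, g x ∂μ := by
  rw [← Real.norm_eq_abs, ← integral_const_mul]
  refine norm_integral_le_of_norm_le (hg.const_mul _) (.of_forall fun x => ?_)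
  rw [mul_comm]
  exact norm_integral_le_of_norm_le_const (.of_forall (hfg x))

theorem maxwellian3_eq_exp {β : ℝ} (hβ : 0 < β) (x : ℝ³) :
    Maxwellian3 β x = exp (log ((β / (2 * π)) ^ ((3 : ℝ) / 2)) - β / 2 * ‖x‖ ^ 2) := by
  rw [Maxwellian3, sub_eq_add_neg, exp_add, exp_log (by positivity), neg_mul]

noncomputable def gainKernel (β : ℝ) (v vc ω : ℝ³) : ℝ :=
  max ⟪vc - v, ω⟫ 0 * Maxwellian3 β vc * Maxwellian3 β v ^ ((1 : ℝ) / 2)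
    * Maxwellian3 β (collisionVel v vc ω) ^ (-((1 : ℝ) / 2))

theorem gainOp_eq (β : ℝ) (R : ℝ³ → ℝ) (v : ℝ³) :
    gainOp β R v = ∫ vc, ∫ ω : Metric.sphere (0 : ℝ³) 1,
      gainKernel β v vc ω * R (collisionVel v vc ω) ∂((volume : Measure ℝ³).toSphere) :=
  rfl

theorem gainKernel_eq {β : ℝ} (hβ : 0 < β) {ω : ℝ³} (hω : ‖ω‖ = 1) (v vc : ℝ³) :
    gainKernel β v vc ω = max ⟪vc - v, ω⟫ 0 * ((β / (2 * π)) ^ ((3 : ℝ) / 2)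
      * exp (-(β / 4 * (‖vc‖ ^ 2 + ‖collisionVel vc v ω‖ ^ 2)))) := by
  have energy := norm_sq_collisionVel_add_norm_sq_collisionVel hω v vc
  set Z := (β / (2 * π)) ^ ((3 : ℝ) / 2)
  rw [gainKernel, maxwellian3_eq_exp hβ, maxwellian3_eq_exp hβ, maxwellian3_eq_exp hβ,
    ← exp_mul, ← exp_mul, mul_assoc, mul_assoc, ← exp_add, ← exp_add]
  conv_rhs => rw [← exp_log (show 0 < Z by positivity), ← exp_add]
  congr 2
  linear_combination (β / 4) * energy

theorem abs_gainKernel_le {β : ℝ} (hβ : 0 < β) {ω : ℝ³} (hω : ‖ω‖ = 1) (v vc : ℝ³) :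
    |gainKernel β v vc ω|
      ≤ (β / (2 * π)) ^ ((3 : ℝ) / 2) / √(β / 8) * exp (-(β / 8 * ‖vc‖ ^ 2)) := by
  set w := collisionVel vc v ω
  have hrel : max ⟪vc - v, ω⟫ 0 ≤ ‖vc‖ + ‖w‖ := by
    refine max_le ?_ (by positivity)
    calc ⟪vc - v, ω⟫ ≤ |⟪vc - v, ω⟫| := le_abs_self _
      _ = ‖vc - w‖ := (norm_sub_collisionVel hω vc v).symm
      _ ≤ ‖vc‖ + ‖w‖ := norm_sub_le _ _
  set Z := (β / (2 * π)) ^ ((3 : ℝ) / 2)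
  rw [gainKernel_eq hβ hω, abs_of_nonneg (by positivity), show β / 4 = 2 * (β / 8) by ring]
  calc max ⟪vc - v, ω⟫ 0 * (Z * exp (-(2 * (β / 8) * (‖vc‖ ^ 2 + ‖w‖ ^ 2))))
      ≤ Z * ((‖vc‖ + ‖w‖) * exp (-(2 * (β / 8) * (‖vc‖ ^ 2 + ‖w‖ ^ 2)))) := by
        rw [mul_left_comm]; gcongr
    _ ≤ Z * (exp (-(β / 8 * ‖vc‖ ^ 2)) / √(β / 8)) := by
        gcongr; exact add_mul_exp_neg_sq_add_sq_le (by positivity) (norm_nonneg _) (norm_nonneg _)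
    _ = Z / √(β / 8) * exp (-(β / 8 * ‖vc‖ ^ 2)) := by ring

/-- **Boundedness of the gain operator on `L^∞`** (Lemma B.1):
there is a constant `C` depending only on `β` such that
`|K̂R(v)| ≤ C · sup |R|` for every bounded measurable `R` and every `v`. -/
theorem gainOp_bounded (β : ℝ) (hβ : 0 < β) :
    ∃ C : ℝ, ∀ R : EuclideanSpace ℝ (Fin 3) → ℝ, Measurable R →
      ∀ M : ℝ, (∀ η, |R η| ≤ M) →
        ∀ v : EuclideanSpace ℝ (Fin 3), |gainOp β R v| ≤ C * M := by
  set σ := (volume : Measure ℝ³).toSphere.real Set.univ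
  set D := (β / (2 * π)) ^ ((3 : ℝ) / 2) / √(β / 8)
  set I := ∫ vc : ℝ³, exp (-(β / 8 * ‖vc‖ ^ 2))
  refine ⟨σ * (D * I), fun R _ M hM v => ?_⟩
  have hM0 : 0 ≤ M := (abs_nonneg _).trans (hM 0)
  have hg := ((integrable_exp_neg_mul_sq_norm (V := ℝ³) (by positivity : 0 < β / 8)).const_mul
    D).mul_const M
  calc |gainOp β R v| ≤ σ * ∫ vc, D * exp (-(β / 8 * ‖vc‖ ^ 2)) * M := by
        rw [gainOp_eq]
        refine abs_integral_integral_le hg fun vc ω => ?_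
        rw [abs_mul]
        exact mul_le_mul (abs_gainKernel_le hβ (by simp) v vc) (hM _) (abs_nonneg _)
          (by positivity)
    _ = σ * (D * I) * M := by rw [integral_mul_const, integral_const_mul]; ring
end

section
/- For every β > 0 and every b ≥ 0, ∫_0^∞ r · exp( −(β/8) ( r² + (r − 2b)² ) ) dr ≤ (2/β) exp(−β b²/2) + (16/β) exp(−β b²/8). -/
/-!
Since `r² + (r − 2b)² ≥ r²/2 + b²`, the integrand is at most `e^{−βb²/8} · r e^{−βr²/16}`, and
`∫₀^∞ r e^{−cr²} dr = 1/(2c)`. This bounds the integral by `(8/β) e^{−βb²/8}`, already below the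
second term of the right-hand side.
-/

open MeasureTheory Real Set

theorem integral_Ioi_mul_exp_neg_mul_sq {c : ℝ} (hc : 0 < c) :
    ∫ r in Ioi (0 : ℝ), r * exp (-c * r ^ 2) = (2 * c)⁻¹ := by
  apply Complex.ofReal_injective
  rw [← integral_complex_ofReal]
  push_cast
  exact integral_mul_cexp_neg_mul_sq (by simpa using hc)

theorem integral_Ioi_mul_exp_le_of_le {f : ℝ → ℝ} (hf : Measurable f) {c d : ℝ} (hc : 0 < c)
    (hfd : ∀ r > 0, f r ≤ -c * r ^ 2 + d) :
    ∫ r in Ioi (0 : ℝ), r * exp (f r) ≤ exp d / (2 * c) := by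
  have hle : ∀ r ∈ Ioi (0 : ℝ), r * exp (f r) ≤ exp d * (r * exp (-c * r ^ 2)) := fun r hr => by
    rw [mul_left_comm, ← exp_add]
    gcongr
    · exact le_of_lt hr
    · linarith [hfd r hr]
  have hmaj : IntegrableOn (fun r => exp d * (r * exp (-c * r ^ 2))) (Ioi 0) :=
    ((integrable_mul_exp_neg_mul_sq hc).const_mul _).integrableOn
  have hint : IntegrableOn (fun r => r * exp (f r)) (Ioi 0) := by
    refine hmaj.mono' (measurable_id.mul hf.exp).aestronglyMeasurable ?_
    filter_upwards [ae_restrict_mem measurableSet_Ioi] with r hr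
    rw [norm_of_nonneg (mul_nonneg (le_of_lt hr) (exp_pos _).le)]
    exact hle r hr
  calc ∫ r in Ioi (0 : ℝ), r * exp (f r)
      ≤ ∫ r in Ioi (0 : ℝ), exp d * (r * exp (-c * r ^ 2)) :=
        setIntegral_mono_on hint hmaj measurableSet_Ioi hle
    _ = exp d / (2 * c) := by
        rw [integral_const_mul, integral_Ioi_mul_exp_neg_mul_sq hc, div_eq_mul_inv]

theorem half_sq_add_sq_le (r b : ℝ) : r ^ 2 / 2 + b ^ 2 ≤ r ^ 2 + (r - 2 * b) ^ 2 := by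
  nlinarith [sq_nonneg (3 * r - 4 * b), sq_nonneg b]

theorem radial_gaussian_estimate_general (β : ℝ) (hβ : 0 < β) (b : ℝ) :
    ∫ r in Set.Ioi (0 : ℝ), r * Real.exp (-(β / 8) * (r ^ 2 + (r - 2 * b) ^ 2))
      ≤ 2 / β * Real.exp (-β * b ^ 2 / 2) + 16 / β * Real.exp (-β * b ^ 2 / 8) := by
  have hexponent : ∀ r > 0, -(β / 8) * (r ^ 2 + (r - 2 * b) ^ 2)
      ≤ -(β / 16) * r ^ 2 + -β * b ^ 2 / 8 := fun r _ => by
    nlinarith [half_sq_add_sq_le r b]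
  calc _ ≤ exp (-β * b ^ 2 / 8) / (2 * (β / 16)) :=
        integral_Ioi_mul_exp_le_of_le (by fun_prop) (by positivity) hexponent
    _ = 8 / β * exp (-β * b ^ 2 / 8) := by field_simp; ring
    _ ≤ 2 / β * exp (-β * b ^ 2 / 2) + 16 / β * exp (-β * b ^ 2 / 8) := by
        have hfirst_nonneg : 0 ≤ 2 / β * exp (-β * b ^ 2 / 2) := by positivity
        have hcoeff : 8 / β ≤ 16 / β := by gcongr; norm_num
        nlinarith [exp_pos (-β * b ^ 2 / 8)]

/-- **Radial Gaussian estimate** (proof of Lemma B.1): for `β > 0` and `b ≥ 0`,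
`∫_0^∞ r e^{−(β/8)(r² + (r−2b)²)} dr ≤ (2/β) e^{−βb²/2} + (16/β) e^{−βb²/8}`. -/
theorem radial_gaussian_estimate (β : ℝ) (hβ : 0 < β) (b : ℝ) (hb : 0 ≤ b) :
    ∫ r in Set.Ioi (0 : ℝ), r * Real.exp (-(β / 8) * (r ^ 2 + (r - 2 * b) ^ 2))
      ≤ 2 / β * Real.exp (-β * b ^ 2 / 2) + 16 / β * Real.exp (-β * b ^ 2 / 8) :=
  radial_gaussian_estimate_general β hβ b
end

section
/- Let d ≥ 3. There exists a finite constant C_d such that for every a ∈ ℝ^d, ∫_{ℝ^d} ∫_{ℝ^d} exp(−|v|² − |w|²) / sin∠(a − v, w − v) dw dv ≤ C_d, where ∠(x, y) ∈ [0, π] denotes the angle between two nonzero vectors x, y ∈ ℝ^d (the integrand being interpreted as +∞ on the null set where a − v or w − v vanishes or where the two vectors are parallel). -/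
/-!
Substituting `w = x + v` and splitting the weight,
`exp (-|v|² - |w|²) ≤ exp (-|v|² / 2) · exp (-|x|² / 4)`, reduces the claim to a bound on
`J(u) = ∫ exp (-|x|² / 4) / sin ∠(u, x) dx` that is uniform in `u = a - v`. By rotation
invariance `J(u)` is the same for all `u ≠ 0`, and `J(0) = ∫ exp (-|x|² / 4)` is smaller, so
it suffices to take `u = e_k`. Then `sin ∠(e_k, x) · |x|` is the length of the part of `x`
orthogonal to `e_k`; for `d ≥ 3` it dominates `√(|x_i| |x_j|)` for two further coordinates,
and the resulting majorant is a product of one-dimensional integrals of `|t|^(-1/2) e^(-b t²)`,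
which are finite.
-/

open MeasureTheory Real InnerProductGeometry
open scoped ENNReal

theorem integrable_abs_rpow_mul_exp_neg_mul_sq {b s : ℝ} (hb : 0 < b) (hs : -1 < s) :
    Integrable fun x : ℝ => |x| ^ s * exp (-b * x ^ 2) := by
  have h := integrable_rpow_mul_exp_neg_mul_sq hb hs
  refine (h.norm.add h.comp_neg.norm).mono' (by fun_prop) (ae_of_all _ fun x => ?_)
  simp only [Pi.add_apply, norm_mul, neg_sq, norm_of_nonneg (exp_pos _).le]
  rcases le_total 0 x with hx | hx
  · rw [abs_of_nonneg hx, norm_of_nonneg (rpow_nonneg hx s)]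
    exact le_add_of_nonneg_right (by positivity)
  · rw [abs_of_nonpos hx, norm_of_nonneg (rpow_nonneg (neg_nonneg.2 hx) s)]
    exact le_add_of_nonneg_left (by positivity)

theorem mul_exp_neg_mul_sq_le_s11 {b : ℝ} (hb : 0 < b) (r : ℝ) :
    r * exp (-b * r ^ 2) ≤ (√b)⁻¹ * exp (-(b / 2) * r ^ 2) := by
  have hsb : 0 < √b := sqrt_pos.2 hb
  have key : √b * r ≤ exp (b / 2 * r ^ 2) := by
    have := add_one_le_exp (b / 2 * r ^ 2)
    nlinarith [sq_nonneg (√b * r - 1), sq_sqrt hb.le]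
  have hexp : exp (-(b / 2) * r ^ 2) = exp (-b * r ^ 2) * exp (b / 2 * r ^ 2) := by
    rw [← exp_add]; ring_nf
  rw [hexp, le_inv_mul_iff₀ hsb, ← mul_assoc, mul_comm _ (exp _)]
  exact mul_le_mul_of_nonneg_left key (exp_pos _).le

section InnerProductSpace

variable {V : Type*} [NormedAddCommGroup V] [InnerProductSpace ℝ V] [FiniteDimensional ℝ V]
  [MeasurableSpace V] [BorelSpace V]

theorem lintegral_comp_norm_angle_eq (Φ : ℝ → ℝ → ℝ≥0∞) {u u' : V} (hu : u ≠ 0) (hu' : u' ≠ 0) :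
    ∫⁻ x, Φ ‖x‖ (angle u x) = ∫⁻ x, Φ ‖x‖ (angle u' x) := by
  have hang : ∀ {w : V}, w ≠ 0 → ∀ x, angle w x = angle (‖w‖⁻¹ • w) x := fun {w} hw x =>
    (angle_smul_left_of_pos w x (inv_pos.2 (norm_pos_iff.2 hw))).symm
  have hunit : ∀ {w : V}, w ≠ 0 → ‖‖w‖⁻¹ • w‖ = 1 := fun {w} hw => by simp [norm_smul, hw]
  let R : V ≃ₗᵢ[ℝ] V := Submodule.reflection (ℝ ∙ (‖u‖⁻¹ • u - ‖u'‖⁻¹ • u'))ᗮ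
  have hR : R (‖u‖⁻¹ • u) = ‖u'‖⁻¹ • u' :=
    Submodule.reflection_sub (by rw [hunit hu, hunit hu'])
  simp_rw [hang hu, hang hu']
  conv_rhs => rw [← R.measurePreserving.lintegral_comp_emb R.toHomeomorph.measurableEmbedding]
  refine lintegral_congr fun x => ?_
  rw [← hR]
  exact congrArg₂ Φ (R.norm_map x).symm (R.toLinearIsometry.angle_map _ x).symm

theorem lintegral_div_sin_angle_le (g : ℝ → ℝ) (u : V) {e : V} (he : e ≠ 0) :
    ∫⁻ x, ENNReal.ofReal (g ‖x‖) / ENNReal.ofReal (sin (angle u x)) ≤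
      ∫⁻ x, ENNReal.ofReal (g ‖x‖) / ENNReal.ofReal (sin (angle e x)) := by
  rcases eq_or_ne u 0 with rfl | hu
  · refine lintegral_mono fun x => ?_
    rw [angle_zero_left, sin_pi_div_two, ENNReal.ofReal_one]
    exact ENNReal.div_le_div_left (ENNReal.ofReal_le_one.2 (sin_le_one _)) _
  · exact (lintegral_comp_norm_angle_eq
      (fun r θ => ENNReal.ofReal (g r) / ENNReal.ofReal (sin θ)) hu he).le

theorem lintegral_exp_div_sin_angle_sub_le (a v : V) :
    ∫⁻ w, ENNReal.ofReal (exp (-‖v‖ ^ 2 - ‖w‖ ^ 2)) /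
        ENNReal.ofReal (sin (angle (a - v) (w - v))) ≤
      ENNReal.ofReal (exp (-2⁻¹ * ‖v‖ ^ 2)) *
        ∫⁻ x, ENNReal.ofReal (exp (-4⁻¹ * ‖x‖ ^ 2)) / ENNReal.ofReal (sin (angle (a - v) x)) := by
  rw [← lintegral_add_right_eq_self _ v, ← lintegral_const_mul' _ _ ENNReal.ofReal_ne_top]
  refine lintegral_mono fun x => ?_
  rw [add_sub_cancel_right, ← mul_div_assoc, ← ENNReal.ofReal_mul (exp_pos _).le, ← exp_add]
  gcongr
  have : ‖x‖ ≤ ‖x + v‖ + ‖v‖ := by simpa using norm_sub_le (x + v) v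
  nlinarith [norm_nonneg x, norm_nonneg v, norm_nonneg (x + v), sq_nonneg (‖x + v‖ - ‖v‖)]

end InnerProductSpace

namespace EuclideanSpace

variable {ι : Type*} [Fintype ι]

theorem integrable_prod_abs_rpow_mul_exp_neg_mul_sq_norm {b : ℝ} (hb : 0 < b) (p : ι → ℝ)
    (hp : ∀ i, -1 < p i) :
    Integrable fun x : EuclideanSpace ℝ ι => (∏ i, |x i| ^ p i) * exp (-b * ‖x‖ ^ 2) := by
  rw [← (PiLp.volume_preserving_toLp ι).integrable_comp_emb
    (MeasurableEquiv.toLp 2 _).measurableEmbedding]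
  convert Integrable.fintype_prod (μ := fun _ => volume)
    (fun i => integrable_abs_rpow_mul_exp_neg_mul_sq hb (hp i)) using 2 with x
  simp only [Function.comp_apply, real_norm_sq_eq, Finset.mul_sum, exp_sum,
    Finset.prod_mul_distrib]
  rfl

theorem ae_apply_ne_zero (i : ι) : ∀ᵐ x : EuclideanSpace ℝ ι, x i ≠ 0 := by
  classical
  let s : Submodule ℝ (EuclideanSpace ℝ ι) :=
    LinearMap.ker (proj i : EuclideanSpace ℝ ι →L[ℝ] ℝ).toLinearMap
  have hs : s ≠ ⊤ := fun h => by
    have : single i (1 : ℝ) ∈ s := h ▸ Submodule.mem_top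
    simp [s] at this
  refine ae_iff.2 ?_
  convert Measure.addHaar_submodule volume s hs using 2
  ext x
  simp [s]

variable [DecidableEq ι]

theorem integrable_inv_sqrt_abs_mul_abs_mul_exp_neg_mul_sq_norm {i j : ι} (hij : i ≠ j) {b : ℝ}
    (hb : 0 < b) :
    Integrable fun x : EuclideanSpace ℝ ι => (√(|x i| * |x j|))⁻¹ * exp (-b * ‖x‖ ^ 2) := by
  let p : ι → ℝ := fun l => if l ∈ ({i, j} : Finset ι) then -2⁻¹ else 0
  have hp : ∀ l, -1 < p l := fun l => by dsimp only [p]; split_ifs <;> norm_num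
  convert integrable_prod_abs_rpow_mul_exp_neg_mul_sq_norm hb p hp using 3 with x
  symm
  calc ∏ l, |x l| ^ p l
      = ∏ l, if l ∈ ({i, j} : Finset ι) then |x l| ^ (-2⁻¹ : ℝ) else 1 := by
        congr! 1 with l; simp only [p]; split_ifs <;> simp
    _ = |x i| ^ (-2⁻¹ : ℝ) * |x j| ^ (-2⁻¹ : ℝ) := by
        rw [Finset.prod_ite_mem, Finset.univ_inter, Finset.prod_pair hij]
    _ = (√(|x i| * |x j|))⁻¹ := by
        rw [← mul_rpow (abs_nonneg _) (abs_nonneg _), sqrt_eq_rpow, rpow_neg (by positivity)]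
        norm_num

theorem sqrt_abs_mul_abs_le_sin_angle_single_mul_norm {i j k : ι} (hij : i ≠ j) (hik : i ≠ k)
    (hjk : j ≠ k) (x : EuclideanSpace ℝ ι) :
    √(|x i| * |x j|) ≤ sin (angle (single k (1 : ℝ)) x) * ‖x‖ := by
  have hsin := sin_angle_mul_norm_mul_norm (single k (1 : ℝ)) x
  simp only [PiLp.norm_single, norm_one, one_mul, real_inner_self_eq_norm_sq,
    inner_single_left, map_one, PiLp.single_apply, if_true] at hsin
  rw [hsin]
  refine sqrt_le_sqrt ?_
  have hsum : x i ^ 2 + x j ^ 2 + x k ^ 2 ≤ ‖x‖ ^ 2 := by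
    rw [real_norm_sq_eq]
    calc x i ^ 2 + x j ^ 2 + x k ^ 2 = ∑ l ∈ {i, j, k}, x l ^ 2 := by
          rw [Finset.sum_insert (by simp [hij, hik]), Finset.sum_pair hjk, add_assoc]
      _ ≤ ∑ l, x l ^ 2 := Finset.sum_le_univ_sum_of_nonneg fun l => sq_nonneg _
  nlinarith [sq_abs (x i), sq_abs (x j), sq_nonneg (|x i| - |x j|)]

theorem lintegral_exp_neg_mul_sq_norm_div_sin_angle_single_lt_top {i j k : ι} (hij : i ≠ j)
    (hik : i ≠ k) (hjk : j ≠ k) {b : ℝ} (hb : 0 < b) :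
    ∫⁻ x : EuclideanSpace ℝ ι, ENNReal.ofReal (exp (-b * ‖x‖ ^ 2)) /
      ENNReal.ofReal (sin (angle (single k (1 : ℝ)) x)) < ⊤ := by
  have hF := (integrable_inv_sqrt_abs_mul_abs_mul_exp_neg_mul_sq_norm hij (half_pos hb)).const_mul
    (√b)⁻¹
  refine lt_of_le_of_lt (lintegral_mono_ae ?_) hF.lintegral_lt_top
  -- The majorant takes the junk value `0⁻¹ = 0` where `x i` or `x j` vanishes.
  filter_upwards [ae_apply_ne_zero i, ae_apply_ne_zero j] with x hi hj
  have hQ : 0 < √(|x i| * |x j|) := sqrt_pos.2 (by positivity)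
  have hQle := sqrt_abs_mul_abs_le_sin_angle_single_mul_norm hij hik hjk x
  have hx : 0 < ‖x‖ := norm_pos_iff.2 fun h => hi (by simp [h])
  have hsin : 0 < sin (angle (single k (1 : ℝ)) x) :=
    pos_of_mul_pos_left (hQ.trans_le hQle) hx.le
  rw [← ENNReal.ofReal_div_of_pos hsin]
  refine ENNReal.ofReal_le_ofReal ?_
  calc exp (-b * ‖x‖ ^ 2) / sin (angle (single k (1 : ℝ)) x)
      = ‖x‖ * exp (-b * ‖x‖ ^ 2) / (sin (angle (single k (1 : ℝ)) x) * ‖x‖) := by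
        field_simp
    _ ≤ (√b)⁻¹ * exp (-(b / 2) * ‖x‖ ^ 2) / √(|x i| * |x j|) :=
        div_le_div₀ (by positivity) (mul_exp_neg_mul_sq_le_s11 hb _) hQ hQle
    _ = (√b)⁻¹ * ((√(|x i| * |x j|))⁻¹ * exp (-(b / 2) * ‖x‖ ^ 2)) := by ring

end EuclideanSpace

/-- **Uniform bound on the sine-singularity Gaussian integral** (Section 3.4):
for `d ≥ 3` there is a finite constant `C_d` such that for every `a ∈ ℝᵈ`,
`∫∫ e^{−|v|²−|w|²} / sin∠(a−v, w−v) dw dv ≤ C_d`,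
the integrand being `+∞` where the sine of the angle vanishes (division in `ℝ≥0∞`). -/
theorem sine_singularity_integral_bound (d : ℕ) (hd : 3 ≤ d) :
    ∃ C : ℝ, ∀ a : EuclideanSpace ℝ (Fin d),
      (∫⁻ v : EuclideanSpace ℝ (Fin d), ∫⁻ w : EuclideanSpace ℝ (Fin d),
          ENNReal.ofReal (Real.exp (-‖v‖ ^ 2 - ‖w‖ ^ 2))
            / ENNReal.ofReal (Real.sin (InnerProductGeometry.angle (a - v) (w - v))))
        ≤ ENNReal.ofReal C := by
  let e : EuclideanSpace ℝ (Fin d) := EuclideanSpace.single ⟨2, by omega⟩ 1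
  have he : e ≠ 0 := by simp [e]
  set K := ∫⁻ x, ENNReal.ofReal (exp (-4⁻¹ * ‖x‖ ^ 2)) / ENNReal.ofReal (sin (angle e x))
  set G := ∫⁻ v : EuclideanSpace ℝ (Fin d), ENNReal.ofReal (exp (-2⁻¹ * ‖v‖ ^ 2))
  have hK : K < ⊤ :=
    EuclideanSpace.lintegral_exp_neg_mul_sq_norm_div_sin_angle_single_lt_top
      (i := ⟨0, by omega⟩) (j := ⟨1, by omega⟩) (by simp [Fin.ext_iff]) (by simp [Fin.ext_iff])
      (by simp [Fin.ext_iff]) (by norm_num)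
  have hG : G < ⊤ := by
    have := (EuclideanSpace.integrable_prod_abs_rpow_mul_exp_neg_mul_sq_norm
      (b := 2⁻¹) (by norm_num) (0 : Fin d → ℝ) (by norm_num)).lintegral_lt_top
    simpa only [Pi.zero_apply, rpow_zero, Finset.prod_const_one, one_mul] using this
  refine ⟨(G * K).toReal, fun a => ?_⟩
  rw [ENNReal.ofReal_toReal (ENNReal.mul_ne_top hG.ne hK.ne)]
  calc _ ≤ ∫⁻ v, ENNReal.ofReal (exp (-2⁻¹ * ‖v‖ ^ 2)) * K :=
        lintegral_mono fun v => (lintegral_exp_div_sin_angle_sub_le a v).trans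
          (mul_le_mul_right (lintegral_div_sin_angle_le (fun r => exp (-4⁻¹ * r ^ 2)) _ he) _)
    _ = G * K := lintegral_mul_const' _ _ hK.ne
end

section
/- Let d ≥ 2. There exists a constant C_d, depending only on d, such that for all linearly independent unit vectors a, b ∈ ℝ^d, all points p, q ∈ ℝ^d and all ε > 0, the Lebesgue measure of the intersection of the two cylinders { x ∈ ℝ^d : dist(x, p + ℝa) ≤ ε } ∩ { x ∈ ℝ^d : dist(x, q + ℝb) ≤ ε } is at most C_d · ε^d / sin∠(a, b), where ∠(a, b) ∈ (0, π) is the angle between a and b. -/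
/-!
Fix a point `x₀` of the intersection and put `u = x - x₀` for another point `x`. Since both
points lie in each cylinder, the components of `u` orthogonal to `a` and to `b` have norm at
most `2ε`. Projecting `u = ⟪a, u⟫ a + (component ⊥ a)` orthogonally to `b` gives
`|⟪a, u⟫| sin∠(a, b) ≤ 4ε`. So the intersection lies in a translate of a box with one side
`8ε / sin∠(a, b)` along `a` and `d - 1` sides `4ε` in an orthonormal basis extending `a`.
-/

open MeasureTheory Module RealInnerProductSpace InnerProductGeometry

variable {E : Type*} [NormedAddCommGroup E] [InnerProductSpace ℝ E]

theorem norm_starProjection_orthogonal_singleton_sub_le_infDist (a p x : E) :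
    ‖(ℝ ∙ a)ᗮ.starProjection (x - p)‖ ≤
      Metric.infDist x (Set.range fun t : ℝ => p + t • a) := by
  refine (Metric.le_infDist (Set.range_nonempty _)).2 ?_
  rintro _ ⟨t, rfl⟩
  have hx : x - p = (x - (p + t • a)) + t • a := by abel
  rw [dist_eq_norm, hx, map_add, map_smul,
    Submodule.starProjection_orthogonalComplement_singleton_eq_zero, smul_zero, add_zero]
  exact Submodule.norm_starProjection_apply_le _ _

theorem norm_starProjection_orthogonal_singleton_sub_le {a p x y : E} {ε : ℝ}
    (hx : Metric.infDist x (Set.range fun t : ℝ => p + t • a) ≤ ε)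
    (hy : Metric.infDist y (Set.range fun t : ℝ => p + t • a) ≤ ε) :
    ‖(ℝ ∙ a)ᗮ.starProjection (x - y)‖ ≤ 2 * ε := by
  rw [← sub_sub_sub_cancel_right x y p, map_sub, two_mul]
  exact (norm_sub_le _ _).trans (add_le_add
    ((norm_starProjection_orthogonal_singleton_sub_le_infDist a p x).trans hx)
    ((norm_starProjection_orthogonal_singleton_sub_le_infDist a p y).trans hy))

theorem abs_inner_mul_norm_starProjection_le {a : E} (ha : ‖a‖ = 1) (K : Submodule ℝ E)
    [K.HasOrthogonalProjection] (u : E) :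
    |⟪a, u⟫| * ‖K.starProjection a‖ ≤
      ‖(ℝ ∙ a)ᗮ.starProjection u‖ + ‖K.starProjection u‖ := by
  have hu : u = ⟪a, u⟫ • a + (ℝ ∙ a)ᗮ.starProjection u := by
    rw [← Submodule.starProjection_unit_singleton ℝ ha,
      Submodule.starProjection_add_starProjection_orthogonal]
  have hKa : ⟪a, u⟫ • K.starProjection a =
      K.starProjection u - K.starProjection ((ℝ ∙ a)ᗮ.starProjection u) := by
    rw [eq_sub_iff_add_eq, ← map_smul, ← map_add, ← hu]
  calc |⟪a, u⟫| * ‖K.starProjection a‖ = ‖⟪a, u⟫ • K.starProjection a‖ := by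
        rw [norm_smul, Real.norm_eq_abs]
    _ ≤ ‖K.starProjection u‖ + ‖(ℝ ∙ a)ᗮ.starProjection u‖ := by
        rw [hKa]
        exact (norm_sub_le _ _).trans (add_le_add_right (K.norm_starProjection_apply_le _) _)
    _ = _ := add_comm _ _

theorem norm_starProjection_orthogonal_singleton_eq {b : E} (hb : ‖b‖ = 1) (a : E) :
    ‖(ℝ ∙ b)ᗮ.starProjection a‖ = ‖a‖ * Real.sin (angle a b) := by
  have hsq : ‖(ℝ ∙ b)ᗮ.starProjection a‖ ^ 2 = ‖a‖ ^ 2 * 1 ^ 2 - ⟪a, b⟫ * ⟪a, b⟫ := by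
    rw [Submodule.starProjection_orthogonal_val, Submodule.starProjection_unit_singleton ℝ hb,
      norm_sub_sq_real, inner_smul_right, norm_smul, hb, mul_one, Real.norm_eq_abs, sq_abs,
      real_inner_comm b a]
    ring
  rw [← Real.sqrt_sq (norm_nonneg _), hsq, ← hb, ← real_inner_self_eq_norm_sq,
    ← real_inner_self_eq_norm_sq, ← sin_angle_mul_norm_mul_norm, hb, mul_one, mul_comm]

theorem sin_angle_pos_of_linearIndependent {a b : E} (h : LinearIndependent ℝ ![a, b]) :
    0 < Real.sin (angle a b) := by
  refine (sin_angle_nonneg a b).lt_of_ne' ?_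
  rw [Ne, sin_eq_zero_iff_angle_eq_zero_or_angle_eq_pi, angle_eq_zero_iff, angle_eq_pi_iff]
  rintro (⟨ha, r, -, rfl⟩ | ⟨ha, r, -, rfl⟩) <;>
    exact (LinearIndependent.pair_iff' ha).1 h r rfl

theorem Submodule.abs_inner_le_norm_mul_norm_starProjection {K : Submodule ℝ E}
    [K.HasOrthogonalProjection] {v : E} (hv : v ∈ K) (u : E) :
    |⟪v, u⟫| ≤ ‖v‖ * ‖K.starProjection u‖ := by
  rw [← K.starProjection_eq_self_iff.2 hv, K.inner_starProjection_left_eq_right,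
    K.starProjection_eq_self_iff.2 hv]
  exact abs_real_inner_le_norm _ _

theorem exists_orthonormalBasis_apply_zero_eq [FiniteDimensional ℝ E] {n : ℕ}
    (hn : finrank ℝ E = n + 1) {a : E} (ha : ‖a‖ = 1) :
    ∃ B : OrthonormalBasis (Fin (n + 1)) ℝ E, B 0 = a := by
  have hv : Orthonormal ℝ (({0} : Set (Fin (n + 1))).domRestrict fun _ => a) :=
    orthonormal_subsingleton_iff.2 fun _ => ha
  obtain ⟨B, hB⟩ := hv.exists_orthonormalBasis_extension_of_card_eq (by simp [hn])
  exact ⟨B, hB 0 rfl⟩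

section Volume

variable [FiniteDimensional ℝ E] [MeasurableSpace E] [BorelSpace E]

theorem OrthonormalBasis.volume_setOf_abs_inner_le {ι : Type*} [Fintype ι]
    (B : OrthonormalBasis ι ℝ E) (r : ι → ℝ) :
    volume {x : E | ∀ i, |⟪B i, x⟫| ≤ r i} = ∏ i, ENNReal.ofReal (2 * r i) := by
  have hbox : MeasurableSet (Set.univ.pi fun i => Set.Icc (-r i) (r i)) :=
    MeasurableSet.univ_pi fun _ => measurableSet_Icc
  have hset : {x : E | ∀ i, |⟪B i, x⟫| ≤ r i} =
      B.repr ⁻¹' (WithLp.ofLp ⁻¹' Set.univ.pi fun i => Set.Icc (-r i) (r i)) := by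
    ext x
    simp only [Set.mem_ofPred_eq, Set.mem_preimage, Set.mem_univ_pi, Set.mem_Icc, abs_le,
      B.repr_apply_apply]
  rw [hset, B.measurePreserving_repr.measure_preimage
      (hbox.preimage (PiLp.volume_preserving_ofLp ι).measurable).nullMeasurableSet,
    (PiLp.volume_preserving_ofLp ι).measure_preimage hbox.nullMeasurableSet, volume_pi_pi]
  simp only [Real.volume_Icc, sub_neg_eq_add, two_mul]

theorem volume_setOf_abs_inner_le_and_norm_starProjection_le {a : E} (ha : ‖a‖ = 1)
    (L R : ℝ) :
    volume {u : E | |⟪a, u⟫| ≤ L ∧ ‖(ℝ ∙ a)ᗮ.starProjection u‖ ≤ R} ≤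
      ENNReal.ofReal (2 * L) * ENNReal.ofReal (2 * R) ^ (finrank ℝ E - 1) := by
  obtain ⟨n, hn⟩ : ∃ n, finrank ℝ E = n + 1 := Nat.exists_eq_add_one.2 <|
    finrank_pos_iff_exists_ne_zero.2 ⟨a, norm_ne_zero_iff.1 (by simp [ha])⟩
  obtain ⟨B, hB0⟩ := exists_orthonormalBasis_apply_zero_eq hn ha
  have hsub : {u : E | |⟪a, u⟫| ≤ L ∧ ‖(ℝ ∙ a)ᗮ.starProjection u‖ ≤ R} ⊆
      {u | ∀ i, |⟪B i, u⟫| ≤ (Fin.cons L fun _ => R : Fin (n + 1) → ℝ) i} := by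
    rintro u ⟨hL, hR⟩ i
    induction i using Fin.cases with
    | zero => simpa [hB0] using hL
    | succ j =>
      have hBj : B j.succ ∈ (ℝ ∙ a)ᗮ := by
        rw [Submodule.mem_orthogonal_singleton_iff_inner_right, ← hB0]
        exact B.orthonormal.2 (Fin.succ_ne_zero j).symm
      have hBju := Submodule.abs_inner_le_norm_mul_norm_starProjection hBj u
      rw [B.orthonormal.1, one_mul] at hBju
      simpa only [Fin.cons_succ] using hBju.trans hR
  refine (measure_mono hsub).trans_eq ?_
  rw [B.volume_setOf_abs_inner_le, Fin.prod_univ_succ, hn]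
  simp

end Volume

/-- **Volume of the intersection of two transversal cylinders** (Section 3.3):
for `d ≥ 2` there is a constant `C_d` such that for all linearly independent unit
vectors `a, b`, all `p, q ∈ ℝᵈ` and all `ε > 0`, the Lebesgue measure of
`{x : dist(x, p + ℝa) ≤ ε} ∩ {x : dist(x, q + ℝb) ≤ ε}` is at most
`C_d ε^d / sin∠(a, b)`. -/
theorem cylinder_intersection_volume_bound (d : ℕ) (hd : 2 ≤ d) :
    ∃ C : ℝ, ∀ a b : EuclideanSpace ℝ (Fin d), ‖a‖ = 1 → ‖b‖ = 1 →
      LinearIndependent ℝ ![a, b] →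
      ∀ p q : EuclideanSpace ℝ (Fin d), ∀ ε : ℝ, 0 < ε →
        volume ({x : EuclideanSpace ℝ (Fin d) |
            Metric.infDist x (Set.range fun t : ℝ => p + t • a) ≤ ε}
          ∩ {x : EuclideanSpace ℝ (Fin d) |
            Metric.infDist x (Set.range fun t : ℝ => q + t • b) ≤ ε})
          ≤ ENNReal.ofReal (C * ε ^ d / Real.sin (InnerProductGeometry.angle a b)) := by
  obtain ⟨m, rfl⟩ : ∃ m, d = m + 1 := ⟨d - 1, by omega⟩
  refine ⟨2 * 4 ^ (m + 1), fun a b ha hb hab p q ε hε => ?_⟩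
  set S := {x : EuclideanSpace ℝ (Fin (m + 1)) |
      Metric.infDist x (Set.range fun t : ℝ => p + t • a) ≤ ε}
    ∩ {x | Metric.infDist x (Set.range fun t : ℝ => q + t • b) ≤ ε}
  rcases S.eq_empty_or_nonempty with hS | ⟨x₀, hx₀a, hx₀b⟩
  · simp [hS]
  set θ := Real.sin (angle a b)
  have hθ : 0 < θ := sin_angle_pos_of_linearIndependent hab
  have hS_sub : S ⊆ (· + -x₀) ⁻¹'
      {u | |⟪a, u⟫| ≤ 4 * ε / θ ∧ ‖(ℝ ∙ a)ᗮ.starProjection u‖ ≤ 2 * ε} := by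
    rintro x ⟨hxa, hxb⟩
    have hPa := norm_starProjection_orthogonal_singleton_sub_le hxa hx₀a
    have hPb := norm_starProjection_orthogonal_singleton_sub_le hxb hx₀b
    have htransversal := abs_inner_mul_norm_starProjection_le ha (ℝ ∙ b)ᗮ (x - x₀)
    rw [norm_starProjection_orthogonal_singleton_eq hb, ha, one_mul] at htransversal
    rw [Set.mem_preimage, ← sub_eq_add_neg]
    exact ⟨(le_div_iff₀ hθ).2 (by linarith), hPa⟩
  calc volume S
      ≤ volume {u | |⟪a, u⟫| ≤ 4 * ε / θ ∧ ‖(ℝ ∙ a)ᗮ.starProjection u‖ ≤ 2 * ε} :=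
        (measure_mono hS_sub).trans_eq (measure_preimage_add_right _ _ _)
    _ ≤ ENNReal.ofReal (2 * (4 * ε / θ)) * ENNReal.ofReal (2 * (2 * ε)) ^ m := by
        simpa only [finrank_euclideanSpace_fin, Nat.add_sub_cancel] using
          volume_setOf_abs_inner_le_and_norm_starProjection_le ha (4 * ε / θ) (2 * ε)
    _ = ENNReal.ofReal (2 * 4 ^ (m + 1) * ε ^ (m + 1) / θ) := by
        rw [← ENNReal.ofReal_pow (by positivity), ← ENNReal.ofReal_mul (by positivity)]
        congr 1
        field_simp
        ring
end
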